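/- arXiv:2312.01395 — 2 statements merged into one kernel-verified Lean document; each statement's English description precedes it below -/
import Mathlib

section
/- (Universal optimality of the square lattice among rectangular lattices.) Let μ be a nonnegative, nonzero Borel measure on (0,∞) and A > 0 be such that for every Δ > 0 the sum Σ_{(j,k)∈ℤ²∖{(0,0)}} ∫₀^∞ e^{−A(j²/Δ + k²Δ)s} dμ(s) is finite, and let f(r) := ∫₀^∞ e^{−r²s} dμ(s) for r > 0. Then for every Δ > 0 with Δ ≠ 1, E(A,Δ) > E(A,1); i.e., Δ = 1 is the unique minimizer of Δ ↦ E(A,Δ) on (0,∞). -/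
open MeasureTheory

/-- The rectangular-lattice energy
`E(A,Δ) = (1/2) Σ_{(j,k) ∈ ℤ²∖{0}} f(√(A(j²/Δ + k²Δ)))`. -/
noncomputable def rectEnergy (f : ℝ → ℝ) (A Δ : ℝ) : ℝ :=
  (1 / 2) * ∑' p : {p : ℤ × ℤ // p ≠ 0},
    f (Real.sqrt (A * ((p.1.1 : ℝ) ^ 2 / Δ + (p.1.2 : ℝ) ^ 2 * Δ)))

/-!
With `θ(t) = Σₙ e^{-πn²t}`, the lattice Gaussian sum factors:
`Σ_{(j,k)} e^{-π(j²a + k²b)} = θ(a) θ(b)`. Since `f(√(A Q))` is a superposition of the Gaussians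
`e^{-A Q s}` with nonnegative weights, it suffices to show `θ(c)² < θ(c/Δ) θ(cΔ)` for all `c > 0`
and `Δ ≠ 1`, i.e. that `v ↦ log θ(eᵛ)` is strictly convex. Its derivative is `ψ(eᵛ)` with
`ψ(t) = t θ'(t) / θ(t)`, and Jacobi's functional equation `θ(t) = t^{-1/2} θ(1/t)` gives
`ψ(t) + ψ(1/t) = -1/2`, so it is enough that `ψ` increases on `[1, ∞)`. There the first term of
each series dominates: with `E = e^{-πt}`, the bounds `θ ≥ 1`, `-θ' ≤ 3πE` and `θ'' ≥ 2π²E`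
make `ψ'` positive.
-/

open Real Set HurwitzKernelBounds

/-- The `k`-th derivative of the theta function `θ(t) = Σₙ e^{-πn²t} = thetaDeriv 0 t`. -/
noncomputable def thetaDeriv (k : ℕ) (t : ℝ) : ℝ :=
  ∑' n : ℤ, (-π * n ^ 2) ^ k * rexp (-π * n ^ 2 * t)

lemma norm_thetaDeriv_term_le (k : ℕ) (n : ℤ) {s t : ℝ} (hst : s ≤ t) :
    ‖(-π * n ^ 2) ^ k * rexp (-π * n ^ 2 * t)‖ ≤ π ^ k * f_int (2 * k) 0 s n := by
  rw [f_int, add_zero, norm_mul, norm_pow, norm_mul, norm_neg, Real.norm_of_nonneg pi_pos.le,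
    Real.norm_of_nonneg (sq_nonneg _), Real.norm_of_nonneg (exp_pos _).le, pow_mul, sq_abs,
    mul_pow, mul_assoc]
  gcongr _ * (_ * rexp ?_)
  exact mul_le_mul_of_nonpos_left hst (by nlinarith [pi_pos, sq_nonneg (n : ℝ)])

lemma summable_thetaDeriv_term (k : ℕ) {t : ℝ} (ht : 0 < t) :
    Summable fun n : ℤ ↦ (-π * n ^ 2) ^ k * rexp (-π * n ^ 2 * t) :=
  ((summable_f_int (2 * k) 0 ht).mul_left _).of_norm_bounded
    fun n ↦ norm_thetaDeriv_term_le k n le_rfl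

lemma hasDerivAt_thetaDeriv (k : ℕ) {t : ℝ} (ht : 0 < t) :
    HasDerivAt (thetaDeriv k) (thetaDeriv (k + 1) t) t := by
  refine hasDerivAt_tsum_of_isPreconnected ((summable_f_int (2 * (k + 1)) 0 (half_pos ht)).mul_left
    (π ^ (k + 1))) isOpen_Ioi isPreconnected_Ioi (fun n y _ ↦ ?_)
    (fun n y hy ↦ norm_thetaDeriv_term_le (k + 1) n (mem_Ioi.1 hy).le) (mem_Ioi.2 (half_lt_self ht))
    (summable_thetaDeriv_term k ht) (mem_Ioi.2 (half_lt_self ht))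
  have := ((hasDerivAt_id y).const_mul (-π * n ^ 2)).exp.const_mul ((-π * n ^ 2) ^ k)
  exact this.congr_deriv (by rw [id, pow_succ]; ring)

lemma summable_thetaDeriv_nat_term (k : ℕ) {t : ℝ} (ht : 0 < t) :
    Summable fun n : ℕ ↦ (π * ((n : ℝ) + 1) ^ 2) ^ k * rexp (-π * ((n : ℝ) + 1) ^ 2 * t) :=
  ((summable_f_nat (2 * k) 1 ht).mul_left (π ^ k)).congr fun n ↦ by
    simp only [f_nat, mul_pow, pow_mul]; ring

lemma neg_one_pow_mul_thetaDeriv (k : ℕ) {t : ℝ} (ht : 0 < t) :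
    (-1) ^ k * thetaDeriv k t =
      0 ^ k + 2 * ∑' n : ℕ, (π * ((n : ℝ) + 1) ^ 2) ^ k * rexp (-π * ((n : ℝ) + 1) ^ 2 * t) := by
  have heven : Function.Even fun n : ℤ ↦ (-π * n ^ 2) ^ k * rexp (-π * n ^ 2 * t) :=
    fun n ↦ by simp only [Int.cast_neg, neg_sq]
  rw [thetaDeriv, tsum_int_eq_zero_add_two_mul_tsum_pnat heven (summable_thetaDeriv_term k ht),
    tsum_pnat_eq_tsum_succ (f := fun n : ℕ ↦ (-π * (n : ℤ) ^ 2) ^ k * rexp (-π * (n : ℤ) ^ 2 * t)),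
    nsmul_eq_mul, Nat.cast_ofNat, mul_add, mul_left_comm ((-1 : ℝ) ^ k) 2, ← tsum_mul_left]
  congr 1
  · rw [← mul_assoc, ← mul_pow]
    simp
  · congr 1
    refine tsum_congr fun n ↦ ?_
    push_cast
    rw [← mul_assoc, ← mul_pow]
    ring

lemma le_neg_one_pow_mul_thetaDeriv (k : ℕ) {t : ℝ} (ht : 0 < t) :
    0 ^ k + 2 * π ^ k * rexp (-π * t) ≤ (-1) ^ k * thetaDeriv k t := by
  rw [neg_one_pow_mul_thetaDeriv k ht]
  have := (summable_thetaDeriv_nat_term k ht).le_tsum 0 fun n _ ↦ by positivity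
  simp only [Nat.cast_zero, zero_add, one_pow, mul_one] at this
  linarith

lemma exp_neg_three_lt : rexp (-3) < 1 / 20 := by
  have h := exp_neg_one_lt_d9
  have : rexp (-3) = rexp (-1) ^ 3 := by rw [← exp_nat_mul]; norm_num
  rw [this]
  calc rexp (-1) ^ 3 < 0.3678794412 ^ 3 := by gcongr
    _ < 1 / 20 := by norm_num

lemma tsum_sq_mul_exp_le {t : ℝ} (ht : 1 ≤ t) :
    ∑' n : ℕ, ((n : ℝ) + 2) ^ 2 * rexp (-π * ((n : ℝ) + 2) ^ 2 * t) ≤ rexp (-π * t) / 2 := by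
  set E := rexp (-π * t)
  set y := rexp (-3)
  have hy : y < 1 / 20 := exp_neg_three_lt
  have hy0 : 0 < y := exp_pos _
  have hterm (n : ℕ) : ((n : ℝ) + 2) ^ 2 * rexp (-π * ((n : ℝ) + 2) ^ 2 * t) ≤
      E * (4 * y) * (4 * y) ^ n := by
    have hsq : ((n : ℝ) + 2) ^ 2 ≤ 4 ^ (n + 1) := by
      have : n + 2 ≤ 2 ^ (n + 1) := Nat.lt_two_pow_self
      rw [show (4 : ℝ) = 2 ^ 2 by norm_num, ← pow_mul, mul_comm, pow_mul]
      gcongr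
      exact_mod_cast this
    have hexp : rexp (-π * ((n : ℝ) + 2) ^ 2 * t) ≤ E * y ^ (n + 1) := by
      rw [← exp_nat_mul, ← exp_add, exp_le_exp]
      push_cast
      have hn : (0 : ℝ) ≤ n := n.cast_nonneg
      have : 3 * ((n : ℝ) + 1) ≤ (((n : ℝ) + 2) ^ 2 - 1) * t :=
        calc 3 * ((n : ℝ) + 1) ≤ ((n : ℝ) + 2) ^ 2 - 1 := by nlinarith
          _ ≤ (((n : ℝ) + 2) ^ 2 - 1) * t := le_mul_of_one_le_right (by nlinarith) ht
      nlinarith [pi_gt_three]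
    calc ((n : ℝ) + 2) ^ 2 * rexp (-π * ((n : ℝ) + 2) ^ 2 * t)
        ≤ 4 ^ (n + 1) * (E * y ^ (n + 1)) := by gcongr
      _ = E * (4 * y) * (4 * y) ^ n := by ring
  have h4y : 4 * y < 1 := by linarith
  calc ∑' n : ℕ, ((n : ℝ) + 2) ^ 2 * rexp (-π * ((n : ℝ) + 2) ^ 2 * t)
      ≤ ∑' n : ℕ, E * (4 * y) * (4 * y) ^ n :=
        Summable.tsum_le_tsum hterm ((summable_f_nat 2 2 (show 0 < t by linarith)).congr fun n ↦ by
          rw [f_nat]) ((summable_geometric_of_lt_one (by positivity) h4y).mul_left _)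
    _ = E * (4 * y) * (1 - 4 * y)⁻¹ := by
        rw [tsum_mul_left, tsum_geometric_of_lt_one (by positivity) h4y]
    _ ≤ E / 2 := by
        rw [mul_assoc, div_eq_mul_inv]
        gcongr
        rw [← div_eq_mul_inv, div_le_iff₀ (by linarith)]
        linarith

lemma neg_thetaDeriv_one_le {t : ℝ} (ht : 1 ≤ t) : -thetaDeriv 1 t ≤ 3 * π * rexp (-π * t) := by
  have ht0 : 0 < t := by linarith
  have h := neg_one_pow_mul_thetaDeriv 1 ht0
  have hsplit := (summable_thetaDeriv_nat_term 1 ht0).tsum_eq_zero_add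
  have htail : ∑' n : ℕ, (π * (((n + 1 : ℕ) : ℝ) + 1) ^ 2) ^ 1 *
      rexp (-π * (((n + 1 : ℕ) : ℝ) + 1) ^ 2 * t) =
      π * ∑' n : ℕ, ((n : ℝ) + 2) ^ 2 * rexp (-π * ((n : ℝ) + 2) ^ 2 * t) := by
    rw [← tsum_mul_left]
    exact tsum_congr fun n ↦ by push_cast; ring_nf
  rw [htail] at hsplit
  simp only [pow_one, neg_one_mul, zero_add, Nat.cast_zero, one_pow, mul_one] at h hsplit
  rw [h, hsplit]
  nlinarith [tsum_sq_mul_exp_le ht, pi_pos]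

lemma one_le_thetaDeriv_zero {t : ℝ} (ht : 0 < t) : 1 ≤ thetaDeriv 0 t := by
  have := le_neg_one_pow_mul_thetaDeriv 0 ht
  simp only [pow_zero, one_mul, mul_one] at this
  linarith [exp_pos (-π * t)]

lemma thetaDeriv_zero_pos {t : ℝ} (ht : 0 < t) : 0 < thetaDeriv 0 t :=
  one_pos.trans_le (one_le_thetaDeriv_zero ht)

noncomputable def thetaElasticity (t : ℝ) : ℝ := t * thetaDeriv 1 t / thetaDeriv 0 t

lemma hasDerivAt_thetaElasticity {t : ℝ} (ht : 0 < t) :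
    HasDerivAt thetaElasticity (((thetaDeriv 1 t + t * thetaDeriv 2 t) * thetaDeriv 0 t -
      t * thetaDeriv 1 t * thetaDeriv 1 t) / thetaDeriv 0 t ^ 2) t :=
  (((hasDerivAt_id' t).mul (hasDerivAt_thetaDeriv 1 ht)).div (hasDerivAt_thetaDeriv 0 ht)
    (thetaDeriv_zero_pos ht).ne').congr_deriv (by simp only [Pi.mul_apply]; ring)

lemma thetaElasticity_deriv_numerator_pos {t : ℝ} (ht : 1 ≤ t) :
    0 < (thetaDeriv 1 t + t * thetaDeriv 2 t) * thetaDeriv 0 t -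
      t * thetaDeriv 1 t * thetaDeriv 1 t := by
  have ht0 : 0 < t := by linarith
  have hD : 1 ≤ thetaDeriv 0 t := one_le_thetaDeriv_zero ht0
  have hN := le_neg_one_pow_mul_thetaDeriv 1 ht0
  have hN' := neg_thetaDeriv_one_le ht
  have hT := le_neg_one_pow_mul_thetaDeriv 2 ht0
  simp only [pow_one, neg_one_mul, zero_add, ne_eq, OfNat.ofNat_ne_zero, not_false_eq_true,
    zero_pow, neg_one_sq, one_mul] at hN hT
  have hE : rexp (-π * t) < 1 / 20 :=
    (exp_le_exp.2 (by nlinarith [pi_gt_three])).trans_lt exp_neg_three_lt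
  have hE0 : 0 < rexp (-π * t) := exp_pos _
  set E := rexp (-π * t)
  set D := thetaDeriv 0 t
  set N := -thetaDeriv 1 t
  set T := thetaDeriv 2 t
  have hpi := pi_gt_three
  have hN0 : 0 ≤ N := le_trans (by positivity) hN
  have hTt : 2 * π ^ 2 * E ≤ t * T :=
    hT.trans (le_mul_of_one_le_left (le_trans (by positivity) hT) ht)
  have hNT : N ≤ t * T := by nlinarith
  have hN2 : N ^ 2 ≤ 9 * π ^ 2 * E / 20 :=
    calc N ^ 2 ≤ (3 * π * E) ^ 2 := pow_le_pow_left₀ hN0 hN' 2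
      _ = 9 * π ^ 2 * E * E := by ring
      _ ≤ 9 * π ^ 2 * E / 20 := by
        nlinarith [mul_le_mul_of_nonneg_left hE.le (by positivity : (0 : ℝ) ≤ 9 * π ^ 2 * E)]
  have key : 0 < t * T - N - t * N ^ 2 := by
    have h1 : t * (2 * π ^ 2 * E) ≤ t * T := by gcongr
    have h2 : t * N ^ 2 ≤ t * (9 * π ^ 2 * E / 20) := by gcongr
    have h3 : 0 < π * E * (31 / 20 * π * t - 3) := by
      have : 0 < 31 / 20 * π * t - 3 := by nlinarith
      positivity
    nlinarith
  calc 0 < t * T - N - t * N ^ 2 := key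
    _ ≤ (t * T - N) * D - t * N ^ 2 := by nlinarith
    _ = _ := by simp only [N, T, D]; ring

lemma thetaElasticity_strictMonoOn_Ici_one : StrictMonoOn thetaElasticity (Ici 1) := by
  refine strictMonoOn_of_deriv_pos (convex_Ici 1) (fun t ht ↦
    (hasDerivAt_thetaElasticity (one_pos.trans_le ht)).continuousAt.continuousWithinAt)
    fun t ht ↦ ?_
  rw [interior_Ici, mem_Ioi] at ht
  rw [(hasDerivAt_thetaElasticity (one_pos.trans ht)).deriv]
  exact div_pos (thetaElasticity_deriv_numerator_pos ht.le)
    (pow_pos (thetaDeriv_zero_pos (one_pos.trans ht)) 2)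

lemma thetaDeriv_zero_eq_evenKernel {t : ℝ} (ht : 0 < t) :
    thetaDeriv 0 t = HurwitzZeta.evenKernel 0 t := by
  simpa [thetaDeriv] using (HurwitzZeta.hasSum_int_evenKernel 0 ht).tsum_eq

lemma thetaDeriv_zero_exp (v : ℝ) :
    thetaDeriv 0 (rexp v) = rexp (-v / 2) * thetaDeriv 0 (rexp (-v)) := by
  rw [thetaDeriv_zero_eq_evenKernel (exp_pos v), thetaDeriv_zero_eq_evenKernel (exp_pos (-v)),
    HurwitzZeta.evenKernel_functional_equation, ← HurwitzZeta.evenKernel_eq_cosKernel_of_zero,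
    ← exp_mul, one_div (rexp v), ← exp_neg, one_div, ← exp_neg]
  ring_nf

lemma hasDerivAt_log_thetaDeriv_zero_exp (v : ℝ) :
    HasDerivAt (fun v ↦ log (thetaDeriv 0 (rexp v))) (thetaElasticity (rexp v)) v :=
  (((hasDerivAt_thetaDeriv 0 (exp_pos v)).comp v (hasDerivAt_exp v)).log
    (thetaDeriv_zero_pos (exp_pos v)).ne').congr_deriv
      (by simp only [thetaElasticity, Function.comp_apply]; ring)

lemma thetaElasticity_exp_add_exp_neg (v : ℝ) :
    thetaElasticity (rexp v) + thetaElasticity (rexp (-v)) = -1 / 2 := by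
  have hfe : (fun v ↦ log (thetaDeriv 0 (rexp v))) =
      fun v ↦ -v / 2 + log (thetaDeriv 0 (rexp (-v))) := by
    ext v
    rw [thetaDeriv_zero_exp, log_mul (exp_pos _).ne' (thetaDeriv_zero_pos (exp_pos _)).ne', log_exp]
  have h := hasDerivAt_log_thetaDeriv_zero_exp v
  rw [hfe] at h
  have h' := ((hasDerivAt_id' v).neg.div_const 2).add
    ((hasDerivAt_log_thetaDeriv_zero_exp (-v)).comp v (hasDerivAt_neg v))
  linarith [h.unique h']

lemma strictMono_thetaElasticity_exp : StrictMono fun v ↦ thetaElasticity (rexp v) := by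
  have hodd : StrictMono fun v ↦ thetaElasticity (rexp v) + 1 / 4 := by
    refine strictMono_of_odd_strictMonoOn_nonneg (fun v ↦ ?_) fun x hx y hy hxy ↦ ?_
    · linarith [thetaElasticity_exp_add_exp_neg v]
    · simpa using thetaElasticity_strictMonoOn_Ici_one (one_le_exp hx) (one_le_exp hy)
        (exp_lt_exp.2 hxy)
  exact fun x y hxy ↦ by simpa using hodd hxy

lemma strictConvexOn_log_thetaDeriv_zero_exp :
    StrictConvexOn ℝ univ fun v ↦ log (thetaDeriv 0 (rexp v)) := by
  refine StrictMonoOn.strictConvexOn_of_deriv convex_univ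
    (continuous_iff_continuousAt.2 fun v ↦
      (hasDerivAt_log_thetaDeriv_zero_exp v).continuousAt).continuousOn ?_
  rw [interior_univ, funext fun v ↦ (hasDerivAt_log_thetaDeriv_zero_exp v).deriv]
  exact strictMono_thetaElasticity_exp.strictMonoOn univ

lemma thetaDeriv_zero_sq_lt {c d : ℝ} (hc : 0 < c) (hd : 0 < d) (hd1 : d ≠ 1) :
    thetaDeriv 0 c ^ 2 < thetaDeriv 0 (c / d) * thetaDeriv 0 (c * d) := by
  have hu : log c - log d ≠ log c + log d := by
    intro h
    exact hd1 (eq_one_of_pos_of_log_eq_zero hd (by linarith))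
  have h := strictConvexOn_log_thetaDeriv_zero_exp.2 (mem_univ _) (mem_univ _) hu
    (by norm_num : (0 : ℝ) < 1 / 2) (by norm_num : (0 : ℝ) < 1 / 2) (by norm_num)
  simp only [smul_eq_mul] at h
  rw [show 1 / 2 * (log c - log d) + 1 / 2 * (log c + log d) = log c by ring, exp_sub, exp_add,
    exp_log hc, exp_log hd] at h
  have hcd := thetaDeriv_zero_pos (div_pos hc hd)
  have hcd' := thetaDeriv_zero_pos (mul_pos hc hd)
  rw [← log_lt_log_iff (pow_pos (thetaDeriv_zero_pos hc) 2) (mul_pos hcd hcd'), log_pow,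
    log_mul hcd.ne' hcd'.ne']
  push_cast
  linarith

lemma ofReal_thetaDeriv_zero {t : ℝ} (ht : 0 < t) :
    ENNReal.ofReal (thetaDeriv 0 t) = ∑' n : ℤ, ENNReal.ofReal (rexp (-π * n ^ 2 * t)) := by
  have h := summable_thetaDeriv_term 0 ht
  simp only [pow_zero, one_mul] at h
  simp only [thetaDeriv, pow_zero, one_mul,
    ENNReal.ofReal_tsum_of_nonneg (fun _ ↦ (exp_pos _).le) h]

lemma one_add_tsum_ne_zero_exp {a b : ℝ} (ha : 0 < a) (hb : 0 < b) :
    1 + ∑' p : {p : ℤ × ℤ // p ≠ 0},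
      ENNReal.ofReal (rexp (-π * ((p.1.1 : ℝ) ^ 2 * a + (p.1.2 : ℝ) ^ 2 * b))) =
    ENNReal.ofReal (thetaDeriv 0 a * thetaDeriv 0 b) := by
  set F : ℤ × ℤ → ENNReal :=
    fun p ↦ ENNReal.ofReal (rexp (-π * ((p.1 : ℝ) ^ 2 * a + (p.2 : ℝ) ^ 2 * b)))
  have hsplit : ∑' p, F p = 1 + ∑' p : {p : ℤ × ℤ // p ≠ 0}, F p := by
    rw [ENNReal.tsum_eq_add_tsum_ite 0]
    congr 1
    · simp [F]
    · exact ((tsum_subtype {p : ℤ × ℤ | p ≠ 0} F).trans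
        (tsum_congr fun p ↦ by by_cases hp : p = 0 <;> simp [hp])).symm
  have hprod : ∑' p, F p = ENNReal.ofReal (thetaDeriv 0 a * thetaDeriv 0 b) := by
    rw [ENNReal.ofReal_mul (thetaDeriv_zero_pos ha).le, ofReal_thetaDeriv_zero ha,
      ofReal_thetaDeriv_zero hb, ← ENNReal.tsum_mul_right, ENNReal.tsum_prod']
    refine tsum_congr fun j ↦ ?_
    rw [← ENNReal.tsum_mul_left]
    refine tsum_congr fun k ↦ ?_
    rw [← ENNReal.ofReal_mul (exp_pos _).le, ← exp_add]
    simp only [F]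
    ring_nf
  exact hsplit.symm.trans hprod

noncomputable def rectNormSq (Δ : ℝ) (p : ℤ × ℤ) : ℝ := (p.1 : ℝ) ^ 2 / Δ + (p.2 : ℝ) ^ 2 * Δ

lemma rectNormSq_pos {Δ : ℝ} (hΔ : 0 < Δ) {p : ℤ × ℤ} (hp : p ≠ 0) : 0 < rectNormSq Δ p := by
  obtain ⟨j, k⟩ := p
  rcases eq_or_ne j 0 with rfl | hj
  · have hk : (k : ℝ) ≠ 0 := by simpa using hp
    simp only [rectNormSq, Int.cast_zero]
    positivity
  · have : (j : ℝ) ≠ 0 := by exact_mod_cast hj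
    simp only [rectNormSq]
    positivity

lemma one_add_tsum_exp_rectNormSq {A Δ s : ℝ} (hA : 0 < A) (hΔ : 0 < Δ) (hs : 0 < s) :
    1 + ∑' p : {p : ℤ × ℤ // p ≠ 0}, ENNReal.ofReal (rexp (-(A * rectNormSq Δ p) * s)) =
      ENNReal.ofReal (thetaDeriv 0 (A * s / π / Δ) * thetaDeriv 0 (A * s / π * Δ)) := by
  rw [← one_add_tsum_ne_zero_exp (by positivity) (by positivity)]
  congr 1
  refine tsum_congr fun p ↦ ?_
  simp only [rectNormSq]
  field_simp

lemma tsum_exp_rectNormSq_one_lt {A Δ s : ℝ} (hA : 0 < A) (hΔ : 0 < Δ) (hΔ1 : Δ ≠ 1)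
    (hs : 0 < s) :
    ∑' p : {p : ℤ × ℤ // p ≠ 0}, ENNReal.ofReal (rexp (-(A * rectNormSq 1 p) * s)) <
      ∑' p : {p : ℤ × ℤ // p ≠ 0}, ENNReal.ofReal (rexp (-(A * rectNormSq Δ p) * s)) := by
  have hc : 0 < A * s / π := by positivity
  rw [← ENNReal.add_lt_add_iff_left ENNReal.one_ne_top, one_add_tsum_exp_rectNormSq hA one_pos hs,
    one_add_tsum_exp_rectNormSq hA hΔ hs, div_one, mul_one, ENNReal.ofReal_lt_ofReal_iff
    (mul_pos (thetaDeriv_zero_pos (div_pos hc hΔ)) (thetaDeriv_zero_pos (mul_pos hc hΔ))), ← sq]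
  exact thetaDeriv_zero_sq_lt hc hΔ hΔ1

lemma rectEnergy_eq_half_toReal_tsum_lintegral {μ : Measure ℝ} {A Δ : ℝ} {f : ℝ → ℝ}
    (hA : 0 < A) (hΔ : 0 < Δ)
    (hf : ∀ r : ℝ, 0 < r → f r = ∫ s in Ioi 0, rexp (-r ^ 2 * s) ∂μ)
    (hfin : ∑' p : {p : ℤ × ℤ // p ≠ 0},
      ∫⁻ s in Ioi 0, ENNReal.ofReal (rexp (-(A * rectNormSq Δ p) * s)) ∂μ ≠ ⊤) :
    rectEnergy f A Δ = 1 / 2 * (∑' p : {p : ℤ × ℤ // p ≠ 0},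
      ∫⁻ s in Ioi 0, ENNReal.ofReal (rexp (-(A * rectNormSq Δ p) * s)) ∂μ).toReal := by
  rw [rectEnergy, ENNReal.tsum_toReal_eq fun p ↦ ne_top_of_le_ne_top hfin (ENNReal.le_tsum p)]
  congr 1
  refine tsum_congr fun p ↦ ?_
  have hp := mul_pos hA (rectNormSq_pos hΔ p.2)
  rw [rectNormSq] at hp ⊢
  rw [hf _ (sqrt_pos.2 hp), sq_sqrt hp.le, integral_eq_lintegral_of_nonneg_ae
    (ae_of_all _ fun s ↦ (exp_pos _).le) (by fun_prop)]

lemma tsum_lintegral_exp_rectNormSq_one_lt {μ : Measure ℝ} (hμ : μ (Ioi 0) ≠ 0) {A Δ : ℝ}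
    (hA : 0 < A) (hΔ : 0 < Δ) (hΔ1 : Δ ≠ 1)
    (hfin : ∑' p : {p : ℤ × ℤ // p ≠ 0},
      ∫⁻ s in Ioi 0, ENNReal.ofReal (rexp (-(A * rectNormSq 1 p) * s)) ∂μ ≠ ⊤) :
    ∑' p : {p : ℤ × ℤ // p ≠ 0},
        ∫⁻ s in Ioi 0, ENNReal.ofReal (rexp (-(A * rectNormSq 1 p) * s)) ∂μ <
      ∑' p : {p : ℤ × ℤ // p ≠ 0},
        ∫⁻ s in Ioi 0, ENNReal.ofReal (rexp (-(A * rectNormSq Δ p) * s)) ∂μ := by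
  have hmeas (D : ℝ) (p : {p : ℤ × ℤ // p ≠ 0}) :
      Measurable fun s ↦ ENNReal.ofReal (rexp (-(A * rectNormSq D p) * s)) := by fun_prop
  rw [← lintegral_tsum fun p ↦ (hmeas 1 p).aemeasurable] at hfin ⊢
  rw [← lintegral_tsum fun p ↦ (hmeas Δ p).aemeasurable]
  exact lintegral_strict_mono (by rwa [Ne, Measure.restrict_eq_zero])
    (Measurable.tsum fun p ↦ hmeas Δ p).aemeasurable hfin
    ((ae_restrict_iff' measurableSet_Ioi).2 (ae_of_all _ fun s hs ↦
      tsum_exp_rectNormSq_one_lt hA hΔ hΔ1 hs))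

/-- Universal optimality of the square lattice among rectangular lattices:
if `f` is the Laplace transform (in `r²`) of a nonnegative nonzero Borel measure `μ`
on `(0,∞)` and all lattice sums converge, then `Δ = 1` is the unique minimizer
of `Δ ↦ E(A,Δ)` on `(0,∞)`. -/
theorem square_lattice_universal_optimality
    (μ : Measure ℝ) (hμ : μ (Set.Ioi 0) ≠ 0) (A : ℝ) (hA : 0 < A)
    (hfin : ∀ Δ : ℝ, 0 < Δ →
      (∑' p : {p : ℤ × ℤ // p ≠ 0},
        ∫⁻ s in Set.Ioi (0 : ℝ),
          ENNReal.ofReal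
            (Real.exp (-(A * ((p.1.1 : ℝ) ^ 2 / Δ + (p.1.2 : ℝ) ^ 2 * Δ)) * s)) ∂μ) ≠ ⊤)
    (f : ℝ → ℝ)
    (hf : ∀ r : ℝ, 0 < r → f r = ∫ s in Set.Ioi (0 : ℝ), Real.exp (-r ^ 2 * s) ∂μ) :
    ∀ Δ : ℝ, 0 < Δ → Δ ≠ 1 → rectEnergy f A 1 < rectEnergy f A Δ := by
  intro Δ hΔ hΔ1
  rw [rectEnergy_eq_half_toReal_tsum_lintegral hA one_pos hf (hfin 1 one_pos),
    rectEnergy_eq_half_toReal_tsum_lintegral hA hΔ hf (hfin Δ hΔ)]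
  exact mul_lt_mul_of_pos_left (ENNReal.toReal_strict_mono (hfin Δ hΔ)
    (tsum_lintegral_exp_rectNormSq_one_lt hμ hA hΔ hΔ1 (hfin 1 one_pos))) one_half_pos
end

section
/- (Faulhuber–Steinerberger positivity.) For every t > 0, H(t) := t·Θ(t)·Θ'(t) + t²·Θ(t)·Θ''(t) − t²·(Θ'(t))² > 0. -/
/-- The Jacobi theta function `θ₃(q) = Σ_{j ∈ ℤ} q^(j²)`. -/
noncomputable def theta3 (q : ℝ) : ℝ := ∑' j : ℤ, q ^ (j.natAbs ^ 2)

/-- `Θ(t) := θ₃(e^{−t})`. -/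
noncomputable def Θ (t : ℝ) : ℝ := theta3 (Real.exp (-t))

/-- `H(t) := t·Θ(t)·Θ'(t) + t²·Θ(t)·Θ''(t) − t²·(Θ'(t))²`. -/
noncomputable def Hfun (t : ℝ) : ℝ :=
  t * Θ t * deriv Θ t + t ^ 2 * Θ t * iteratedDeriv 2 Θ t - t ^ 2 * (deriv Θ t) ^ 2

/-!
With the moments `cₖ(t) = ∑ₙ nᵏ e^{-tn²}` (`thetaMoment k t`) one has `Θ = c₀`, `Θ' = -c₂` and
`Θ'' = c₄`, hence `H = t N` with `N = t (c₀c₄ - c₂²) - c₀c₂` (`reducedH`); moreover `N / c₀² = -P'`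
for `P = t c₂ / c₀ = -tΘ'/Θ` (`meanEnergy`). Poisson summation gives `√t Θ(t) = √π Θ(π²/t)`,
whose logarithmic derivative says `P(t) + P(π²/t) = 1/2`. Differentiating once more,
`N(t)/c₀(t)²` and `N(π²/t)/c₀(π²/t)²` have the same sign, so it suffices to take `t ≥ π`. There
`r = e^{-t} ≤ 1/20`, and comparing `∑ n^{2j} r^{n²}` with `∑ m^j r^m` gives `c₀ ≤ 1 + 3r` and
`c₂ ≤ 3r`, while `c₄ ≥ 2r`; this makes `N > 0`.
-/

open Real Filter Set

theorem hasDerivAt_const_div (a : ℝ) {x : ℝ} (hx : x ≠ 0) :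
    HasDerivAt (fun s ↦ a / s) (-a / x ^ 2) x := by
  simpa [div_eq_mul_inv, neg_div] using (hasDerivAt_inv hx).const_mul a

theorem exp_neg_mul_natCast_sq (t : ℝ) (n : ℕ) : exp (-t * (n : ℝ) ^ 2) = exp (-t) ^ (n ^ 2) := by
  rw [← exp_nat_mul]
  push_cast
  ring_nf

theorem tsum_pow_mul_pow_sq_le {r : ℝ} (hr₀ : 0 ≤ r) (hr₁ : r < 1) (j : ℕ) :
    ∑' n : ℕ, (n : ℝ) ^ (2 * j) * r ^ (n ^ 2) ≤ ∑' m : ℕ, (m : ℝ) ^ j * r ^ m := by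
  have hsum := summable_pow_mul_geometric_of_norm_lt_one j (r := r)
    (by rwa [norm_of_nonneg hr₀])
  convert tsum_comp_le_tsum_of_inj hsum (fun m ↦ by positivity) (Nat.pow_left_injective two_ne_zero)
    using 3 with n
  simp [pow_mul]

theorem exp_neg_le_of_three_le {t : ℝ} (ht : 3 ≤ t) : exp (-t) ≤ 1 / 20 := by
  have h3 : 20 < exp 3 :=
    calc (20 : ℝ) < 2.7182818283 ^ 3 := by norm_num
      _ < exp 1 ^ 3 := by gcongr; exact exp_one_gt_d9
      _ = exp 3 := by rw [← exp_nat_mul]; norm_num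
  calc exp (-t) ≤ exp (-3) := exp_le_exp.mpr (by linarith)
    _ = (exp 3)⁻¹ := exp_neg 3
    _ ≤ 1 / 20 := by rw [one_div]; exact inv_anti₀ (by norm_num) h3.le

noncomputable def thetaMoment (k : ℕ) (t : ℝ) : ℝ := ∑' n : ℤ, (n : ℝ) ^ k * exp (-t * (n : ℝ) ^ 2)

section ThetaMoments

variable {t : ℝ}

theorem summable_pow_mul_exp_neg_mul_sq (k : ℕ) (ht : 0 < t) :
    Summable fun n : ℤ ↦ (n : ℝ) ^ k * exp (-t * (n : ℝ) ^ 2) := by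
  have hnat : Summable fun n : ℕ ↦ (n : ℝ) ^ k * exp (-t * (n : ℝ) ^ 2) := by
    refine (summable_pow_mul_exp_neg_nat_mul k ht).of_nonneg_of_le (fun n ↦ by positivity)
      fun n ↦ mul_le_mul_of_nonneg_left (exp_le_exp.mpr ?_) (by positivity)
    have : (n : ℝ) ≤ (n : ℝ) ^ 2 := by
      rcases n.eq_zero_or_pos with rfl | hn
      · simp
      · exact le_self_pow₀ (by exact_mod_cast hn) two_ne_zero
    nlinarith
  refine summable_int_iff_summable_nat_and_neg.mpr ⟨by exact_mod_cast hnat, ?_⟩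
  refine (hnat.mul_left ((-1) ^ k)).congr fun n ↦ ?_
  push_cast
  rw [neg_pow, neg_sq]
  ring

theorem hasDerivAt_thetaMoment (k : ℕ) (ht : 0 < t) :
    HasDerivAt (thetaMoment k) (-thetaMoment (k + 2) t) t := by
  have hterm (n : ℤ) (s : ℝ) : HasDerivAt (fun s ↦ (n : ℝ) ^ k * exp (-s * (n : ℝ) ^ 2))
      (-((n : ℝ) ^ (k + 2) * exp (-s * (n : ℝ) ^ 2))) s := by
    have := (((hasDerivAt_neg s).mul_const ((n : ℝ) ^ 2)).exp).const_mul ((n : ℝ) ^ k)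
    exact this.congr_deriv (by ring)
  -- on `Ioi (t / 2)` the derivatives are dominated by the summable terms at `t / 2`
  have hbound (n : ℤ) (s : ℝ) (hs : s ∈ Ioi (t / 2)) :
      ‖-((n : ℝ) ^ (k + 2) * exp (-s * (n : ℝ) ^ 2))‖
        ≤ ‖(n : ℝ) ^ (k + 2) * exp (-(t / 2) * (n : ℝ) ^ 2)‖ := by
    rw [norm_neg, norm_mul, norm_mul]
    gcongr
    simp only [norm_of_nonneg (exp_nonneg _)]
    exact exp_le_exp.mpr (by nlinarith [mem_Ioi.mp hs, sq_nonneg (n : ℝ)])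
  have := hasDerivAt_tsum_of_isPreconnected
    (summable_pow_mul_exp_neg_mul_sq (k + 2) (half_pos ht)).norm isOpen_Ioi isPreconnected_Ioi
    (fun n s _ ↦ hterm n s) hbound (mem_Ioi.mpr (half_lt_self ht))
    (summable_pow_mul_exp_neg_mul_sq k ht) (mem_Ioi.mpr (half_lt_self ht))
  rwa [tsum_neg] at this

theorem Θ_eq_thetaMoment_zero : Θ = thetaMoment 0 := by
  funext t
  refine tsum_congr fun n ↦ ?_
  rw [pow_zero, one_mul, ← exp_nat_mul]
  push_cast [Nat.cast_natAbs, sq_abs]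
  ring_nf

theorem deriv_Θ_of_pos (ht : 0 < t) : deriv Θ t = -thetaMoment 2 t := by
  rw [Θ_eq_thetaMoment_zero]
  exact (hasDerivAt_thetaMoment 0 ht).deriv

theorem iteratedDeriv_two_Θ_of_pos (ht : 0 < t) : iteratedDeriv 2 Θ t = thetaMoment 4 t := by
  have hderiv : deriv Θ =ᶠ[nhds t] fun s ↦ -thetaMoment 2 s :=
    eventually_of_mem (Ioi_mem_nhds ht) fun s hs ↦ deriv_Θ_of_pos hs
  rw [iteratedDeriv_succ, iteratedDeriv_one, hderiv.deriv_eq]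
  simpa using (hasDerivAt_thetaMoment 2 ht).neg.deriv

noncomputable def reducedH (t : ℝ) : ℝ :=
  t * (thetaMoment 0 t * thetaMoment 4 t - thetaMoment 2 t ^ 2) - thetaMoment 0 t * thetaMoment 2 t

theorem Hfun_eq_mul_reducedH (ht : 0 < t) : Hfun t = t * reducedH t := by
  rw [Hfun, deriv_Θ_of_pos ht, iteratedDeriv_two_Θ_of_pos ht, Θ_eq_thetaMoment_zero, reducedH]
  ring

theorem one_le_thetaMoment_zero (ht : 0 < t) : 1 ≤ thetaMoment 0 t := by
  simpa [thetaMoment] using (summable_pow_mul_exp_neg_mul_sq 0 ht).le_tsum 0 fun n _ ↦ by positivity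

theorem thetaMoment_zero_pos (ht : 0 < t) : 0 < thetaMoment 0 t :=
  one_pos.trans_le (one_le_thetaMoment_zero ht)

theorem two_mul_exp_neg_le_thetaMoment {k : ℕ} (hk : Even k) (ht : 0 < t) :
    2 * exp (-t) ≤ thetaMoment k t := by
  have := (summable_pow_mul_exp_neg_mul_sq k ht).sum_le_tsum {1, -1}
    fun n _ ↦ mul_nonneg (hk.pow_nonneg _) (exp_pos _).le
  simpa [thetaMoment, hk.neg_one_pow, two_mul] using this

theorem thetaMoment_add_zero_pow {k : ℕ} (hk : Even k) (ht : 0 < t) :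
    thetaMoment k t + 0 ^ k = 2 * ∑' n : ℕ, (n : ℝ) ^ k * exp (-t) ^ (n ^ 2) := by
  have hsym := tsum_nat_add_neg (summable_pow_mul_exp_neg_mul_sq k ht)
  simp only [Int.cast_natCast, Int.cast_neg, Int.cast_zero, hk.neg_pow, neg_sq,
    exp_neg_mul_natCast_sq, ← two_mul, tsum_mul_left] at hsym
  simpa [thetaMoment] using hsym.symm

theorem thetaMoment_zero_le (ht : 0 < t) :
    thetaMoment 0 t ≤ 2 / (1 - exp (-t)) - 1 := by
  have hr : exp (-t) < 1 := exp_lt_one_iff.mpr (neg_lt_zero.mpr ht)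
  have hle := tsum_pow_mul_pow_sq_le (exp_nonneg (-t)) hr 0
  have hsplit := thetaMoment_add_zero_pow Even.zero ht
  simp only [mul_zero, pow_zero, one_mul, tsum_geometric_of_lt_one (exp_nonneg _) hr] at hle hsplit
  rw [div_eq_mul_inv]
  linarith

theorem thetaMoment_two_le (ht : 0 < t) :
    thetaMoment 2 t ≤ 2 * exp (-t) / (1 - exp (-t)) ^ 2 := by
  have hr : exp (-t) < 1 := exp_lt_one_iff.mpr (neg_lt_zero.mpr ht)
  have hle := tsum_pow_mul_pow_sq_le (exp_nonneg (-t)) hr 1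
  have hsplit := thetaMoment_add_zero_pow even_two ht
  simp only [mul_one, pow_one] at hle
  rw [tsum_coe_mul_geometric_of_norm_lt_one (by rwa [norm_of_nonneg (exp_nonneg _)])] at hle
  rw [zero_pow two_ne_zero, add_zero] at hsplit
  rw [hsplit, mul_div_assoc]
  gcongr

theorem reducedH_pos_of_three_le (ht : 3 ≤ t) : 0 < reducedH t := by
  have ht₀ : 0 < t := by linarith
  set r := exp (-t)
  have hr₀ : 0 < r := exp_pos _
  have hr : r ≤ 1 / 20 := exp_neg_le_of_three_le ht
  have h0_ge : 1 ≤ thetaMoment 0 t := one_le_thetaMoment_zero ht₀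
  have h0_le : thetaMoment 0 t ≤ 1 + 3 * r := by
    refine (thetaMoment_zero_le ht₀).trans ?_
    rw [sub_le_iff_le_add, div_le_iff₀ (by linarith)]
    nlinarith
  have h2_ge : 2 * r ≤ thetaMoment 2 t := two_mul_exp_neg_le_thetaMoment even_two ht₀
  have h2_le : thetaMoment 2 t ≤ 3 * r := by
    refine (thetaMoment_two_le ht₀).trans ?_
    have hsq : 2 / 3 ≤ (1 - r) ^ 2 := by nlinarith
    change 2 * r / (1 - r) ^ 2 ≤ 3 * r
    rw [div_le_iff₀ (by linarith)]
    nlinarith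
  have h4_ge : 2 * r ≤ thetaMoment 4 t := two_mul_exp_neg_le_thetaMoment (by decide) ht₀
  have hdet : 2 * r - 9 * r ^ 2 ≤ thetaMoment 0 t * thetaMoment 4 t - thetaMoment 2 t ^ 2 := by
    nlinarith
  have hscale : 3 * (2 * r - 9 * r ^ 2) ≤ t * (2 * r - 9 * r ^ 2) := by
    apply mul_le_mul_of_nonneg_right ht; nlinarith
  unfold reducedH
  nlinarith

theorem sqrt_mul_thetaMoment_zero (ht : 0 < t) :
    √t * thetaMoment 0 t = √π * thetaMoment 0 (π ^ 2 / t) := by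
  have hpoisson := tsum_exp_neg_mul_int_sq (div_pos ht pi_pos)
  have hl : -π * (t / π) = -t := by field_simp
  have hr : -π / (t / π) = -(π ^ 2 / t) := by field_simp
  rw [hl, hr, ← sqrt_eq_rpow, sqrt_div ht.le] at hpoisson
  simp only [thetaMoment, pow_zero, one_mul, hpoisson]
  field_simp

noncomputable def meanEnergy (t : ℝ) : ℝ := t * thetaMoment 2 t / thetaMoment 0 t

theorem hasDerivAt_meanEnergy (ht : 0 < t) :
    HasDerivAt meanEnergy (-reducedH t / thetaMoment 0 t ^ 2) t := by
  have := ((hasDerivAt_id t).mul (hasDerivAt_thetaMoment 2 ht)).div (hasDerivAt_thetaMoment 0 ht)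
    (thetaMoment_zero_pos ht).ne'
  exact this.congr_deriv (by simp only [id, Pi.mul_apply, reducedH]; ring)

theorem meanEnergy_add_meanEnergy_pi_sq_div (ht : 0 < t) :
    meanEnergy t + meanEnergy (π ^ 2 / t) = 1 / 2 := by
  set u := π ^ 2 / t
  have hu : 0 < u := by positivity
  have hlhs : HasDerivAt (fun s ↦ √s * thetaMoment 0 s)
      (1 / (2 * √t) * thetaMoment 0 t + √t * -thetaMoment 2 t) t :=
    (hasDerivAt_sqrt ht.ne').mul (hasDerivAt_thetaMoment 0 ht)
  have hrhs : HasDerivAt (fun s ↦ √π * thetaMoment 0 (π ^ 2 / s))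
      (√π * (-thetaMoment 2 u * (-π ^ 2 / t ^ 2))) t :=
    ((hasDerivAt_thetaMoment 0 hu).comp t (hasDerivAt_const_div _ ht.ne')).const_mul _
  have hfe : (fun s ↦ √s * thetaMoment 0 s) =ᶠ[nhds t] fun s ↦ √π * thetaMoment 0 (π ^ 2 / s) :=
    eventually_of_mem (Ioi_mem_nhds ht) fun s hs ↦ sqrt_mul_thetaMoment_zero hs
  have hderiv := hlhs.unique (hrhs.congr_of_eventuallyEq hfe)
  have hsqrt : √π = √t * thetaMoment 0 t / thetaMoment 0 u := by
    rw [sqrt_mul_thetaMoment_zero ht, mul_div_cancel_right₀ _ (thetaMoment_zero_pos hu).ne']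
  rw [hsqrt] at hderiv
  have hut : u * t = π ^ 2 := div_mul_cancel₀ _ ht.ne'
  have hc₀t := thetaMoment_zero_pos ht
  have hc₀u := thetaMoment_zero_pos hu
  unfold meanEnergy
  field_simp at hderiv ⊢
  rw [sq_sqrt ht.le] at hderiv
  refine mul_left_cancel₀ (pow_ne_zero 2 ht.ne') ?_
  linear_combination (-1) * hderiv + 2 * t * thetaMoment 0 t * thetaMoment 2 u * hut

theorem reducedH_div_sq_eq (ht : 0 < t) :
    reducedH t / thetaMoment 0 t ^ 2
      = π ^ 2 / t ^ 2 * (reducedH (π ^ 2 / t) / thetaMoment 0 (π ^ 2 / t) ^ 2) := by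
  have hu : 0 < π ^ 2 / t := by positivity
  have hdual : HasDerivAt (fun s ↦ 1 / 2 - meanEnergy (π ^ 2 / s))
      (-(-reducedH (π ^ 2 / t) / thetaMoment 0 (π ^ 2 / t) ^ 2 * (-π ^ 2 / t ^ 2))) t :=
    ((hasDerivAt_meanEnergy hu).comp t (hasDerivAt_const_div _ ht.ne')).const_sub _
  have hfe : meanEnergy =ᶠ[nhds t] fun s ↦ 1 / 2 - meanEnergy (π ^ 2 / s) :=
    eventually_of_mem (Ioi_mem_nhds ht) fun s hs ↦
      eq_sub_of_add_eq (meanEnergy_add_meanEnergy_pi_sq_div hs)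
  linear_combination -(hasDerivAt_meanEnergy ht).unique (hdual.congr_of_eventuallyEq hfe)

theorem reducedH_pos (ht : 0 < t) : 0 < reducedH t := by
  rcases le_or_gt π t with hπt | htπ
  · exact reducedH_pos_of_three_le (pi_gt_three.le.trans hπt)
  · have hu : π ≤ π ^ 2 / t := by rw [le_div_iff₀ ht, sq]; gcongr
    have hdual := reducedH_pos_of_three_le (pi_gt_three.le.trans hu)
    have hquot : 0 < reducedH t / thetaMoment 0 t ^ 2 := by
      rw [reducedH_div_sq_eq ht]
      have hc₀ := thetaMoment_zero_pos (pi_pos.trans_le hu)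
      positivity
    exact (div_pos_iff_of_pos_right (pow_pos (thetaMoment_zero_pos ht) 2)).mp hquot

end ThetaMoments

/-- Faulhuber–Steinerberger positivity: `H(t) > 0` for every `t > 0`. -/
theorem faulhuber_steinerberger_positivity (t : ℝ) (ht : 0 < t) : 0 < Hfun t := by
  rw [Hfun_eq_mul_reducedH ht]
  exact mul_pos ht (reducedH_pos ht)
end
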